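/- Let H be a connected q-regular graph of order n with adjacency spectrum {q, γ_2(H)^{[h_2]}, ..., γ_t(H)^{[h_t]}}. Then for every integer k ≥ 1, the lexicographic power H^k is a regular graph of degree r_k = q·(n^k − 1)/(n − 1), of order n^k, and its adjacency spectrum is the multiset (⋃_{i=0}^{k−1} {(n^i γ_2(H) + r_i)^{[n^{k−1−i} h_2]}, ..., (n^i γ_t(H) + r_i)^{[n^{k−1−i} h_t]}}) ∪ {r_k}, where r_i = q·(n^i − 1)/(n − 1). -/

import Mathlib

open Matrix Finset

universe u

/-- The lexicographic product `H[G]` of two simple graphs. -/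
def lexProd {α β : Type u} (H : SimpleGraph α) (G : SimpleGraph β) :
    SimpleGraph (α × β) where
  Adj x y := H.Adj x.1 y.1 ∨ (x.1 = y.1 ∧ G.Adj x.2 y.2)
  symm.symm x y h := by
    rcases h with h | ⟨h1, h2⟩
    · exact Or.inl h.symm
    · exact Or.inr ⟨h1.symm, h2.symm⟩
  loopless.irrefl x h := by
    rcases h with h | ⟨_, h2⟩
    · exact H.irrefl h
    · exact G.irrefl h2

/-- Vertex type of the iterated lexicographic product `H^k[G]`. -/
def lexIterVert (α β : Type u) : ℕ → Type u
  | 0 => β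
  | k + 1 => α × lexIterVert α β k

/-- Iterated lexicographic product: `H^0[G] = G`, `H^k[G] = H[H^{k-1}[G]]`. -/
def lexIter {α β : Type u} (H : SimpleGraph α) (G : SimpleGraph β) :
    (k : ℕ) → SimpleGraph (lexIterVert α β k)
  | 0 => G
  | k + 1 => lexProd H (lexIter H G k)

instance lexIterVert.instFintype {α β : Type u} [Fintype α] [Fintype β] :
    ∀ k, Fintype (lexIterVert α β k)
  | 0 => inferInstanceAs (Fintype β)
  | k + 1 =>
      letI := lexIterVert.instFintype (α := α) (β := β) k
      inferInstanceAs (Fintype (α × lexIterVert α β k))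

/-- Vertex type of the lexicographic power `H^k` (with `H^0 = K_1`). -/
def powVert (α : Type u) : ℕ → Type u
  | 0 => PUnit
  | 1 => α
  | k + 2 => powVert α (k + 1) × α

/-- Lexicographic powers of a graph: `H^1 = H` and `H^k = H^{k-1}[H]` for `k ≥ 2`. -/
def lexPow {α : Type u} (H : SimpleGraph α) : (k : ℕ) → SimpleGraph (powVert α k)
  | 0 => ⊥
  | 1 => H
  | k + 2 => lexProd (lexPow H (k + 1)) H

instance powVert.instFintype {α : Type u} [Fintype α] : ∀ k, Fintype (powVert α k)
  | 0 => inferInstanceAs (Fintype PUnit)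
  | 1 => inferInstanceAs (Fintype α)
  | k + 2 =>
      letI := powVert.instFintype (α := α) (k + 1)
      inferInstanceAs (Fintype (powVert α (k + 1) × α))

/-- The degree of a vertex. -/
noncomputable def gdeg {α : Type u} [Fintype α] (G : SimpleGraph α) (v : α) : ℕ := by
  classical exact G.degree v

/-- The adjacency spectrum of a graph, as the multiset of roots (eigenvalues, with
multiplicity) of the characteristic polynomial of its adjacency matrix over `ℝ`. -/
noncomputable def adjSpectrum {α : Type u} [Fintype α] (G : SimpleGraph α) : Multiset ℝ := by
  classical exact (Matrix.charpoly (G.adjMatrix ℝ)).roots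

/-- The Laplacian spectrum of a graph, as the multiset of roots (eigenvalues, with
multiplicity) of the characteristic polynomial of its Laplacian matrix over `ℝ`. -/
noncomputable def lapSpectrum {α : Type u} [Fintype α] (G : SimpleGraph α) : Multiset ℝ := by
  classical exact (Matrix.charpoly (G.lapMatrix ℝ)).roots

/-!
The adjacency matrix of `G[H]` is `A(G) ⊗ J + I ⊗ A(H)`, with `J` the all-ones matrix. After
diagonalising `A(G)` by an orthogonal matrix this becomes block diagonal with blocks
`A(H) + λ J`, one for each eigenvalue `λ` of `G`. Since `H` is `q`-regular, the all-ones vector is an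
eigenvector of `A(H)` for `q`, and the matrix determinant lemma shows that adding `λ J` moves this
eigenvalue to `q + λ n` and leaves the rest of the spectrum unchanged. Hence
`σ(G[H]) = {n λ + q : λ ∈ σ(G)} ∪ |V(G)| · (σ(H) ∖ {q})`, and iterating this with `G = H^k`
gives the spectrum of `H^(k+1)`; the degrees obey the same recursion `r_(k+1) = n r_k + q`.
-/

open scoped Kronecker
open Polynomial

section Matrices

variable {K R α β : Type*} [Fintype α] [DecidableEq α] [Fintype β] [DecidableEq β]

theorem det_sub_smul_allOnes [Field K] (A : Matrix α α K) {x : K} (hx : x ≠ 0)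
    (hA : A *ᵥ (fun _ => 1) = x • fun _ => 1) (c : K) :
    x * (A - c • of fun _ _ => (1 : K)).det = (x - c * Fintype.card α) * A.det := by
  have hAu : A *ᵥ (-(c / x) • fun _ => 1) = -c • fun _ => 1 := by
    rw [mulVec_smul, hA, smul_smul, neg_mul, div_mul_cancel₀ c hx]
  have hJ : A - c • of (fun _ _ => (1 : K)) =
      A * (1 + replicateCol Unit (-(c / x) • fun _ : α => (1 : K)) *
        replicateRow Unit (fun _ : α => (1 : K))) := by
    rw [Matrix.mul_add, Matrix.mul_one, ← Matrix.mul_assoc, ← replicateCol_mulVec, hAu]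
    ext i j
    simp [sub_eq_add_neg, Matrix.mul_apply]
  rw [hJ, det_mul, det_one_add_replicateCol_mul_replicateRow]
  simp [dotProduct]
  field_simp
  ring

theorem charpoly_add_smul_allOnes [Field K] [Infinite K] (M : Matrix α α K) {q : K}
    (hM : M *ᵥ (fun _ => 1) = q • fun _ => 1) (c : K) :
    (X - C q) * (M + c • of fun _ _ => (1 : K)).charpoly =
      (X - C (Fintype.card α * c + q)) * M.charpoly := by
  refine eq_of_infinite_eval_eq _ _ ((Set.finite_singleton q).infinite_compl.mono fun x hx => ?_)
  have hA : (scalar α x - M) *ᵥ (fun _ => 1) = (x - q) • fun _ => 1 := by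
    ext i
    simp [sub_mulVec, hM]
  simp only [Set.mem_ofPred_eq, eval_mul, eval_sub, eval_X, eval_C, eval_charpoly,
    sub_add_eq_sub_sub, det_sub_smul_allOnes _ (sub_ne_zero.2 hx) hA]
  ring

theorem roots_charpoly_add_smul_allOnes [Field K] [Infinite K] (M : Matrix α α K) {q : K}
    (hM : M *ᵥ (fun _ => 1) = q • fun _ => 1) {R : Multiset K}
    (hroots : M.charpoly.roots = q ::ₘ R) (c : K) :
    (M + c • of fun _ _ => (1 : K)).charpoly.roots = (Fintype.card α * c + q) ::ₘ R := by
  have h := congrArg roots (charpoly_add_smul_allOnes M hM c)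
  rwa [roots_mul ((monic_X_sub_C q).mul (charpoly_monic _)).ne_zero,
    roots_mul ((monic_X_sub_C _).mul (charpoly_monic _)).ne_zero, roots_X_sub_C, roots_X_sub_C,
    hroots, Multiset.singleton_add, Multiset.singleton_add, Multiset.cons_swap,
    Multiset.cons_inj_right] at h

theorem charpoly_blockDiagonal [CommRing R] (M : β → Matrix α α R) :
    (blockDiagonal M).charpoly = ∏ i, (M i).charpoly := by
  have : charmatrix (blockDiagonal M) = blockDiagonal fun i => charmatrix (M i) := by
    ext ⟨a, i⟩ ⟨b, j⟩
    by_cases hij : i = j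
    · subst hij
      by_cases hab : a = b
      · subst hab; simp
      · simp [hab]
    · have hne : (a, i) ≠ (b, j) := fun h => hij (Prod.ext_iff.1 h).2
      simp [charmatrix_apply_ne _ _ _ hne, blockDiagonal_apply_ne _ _ _ hij]
  rw [charpoly, this, det_blockDiagonal]
  rfl

theorem charpoly_diagonal_kronecker_add_one_kronecker [CommRing R] (d : β → R)
    (J M : Matrix α α R) :
    (diagonal d ⊗ₖ J + 1 ⊗ₖ M).charpoly = ∏ i, (d i • J + M).charpoly := by
  rw [diagonal_kronecker, one_kronecker, ← coe_reindexLinearEquiv R R, ← map_add,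
    coe_reindexLinearEquiv, ← blockDiagonal_add, charpoly_reindex, charpoly_blockDiagonal]
  rfl

theorem roots_charpoly_kronecker_allOnes_add {A : Matrix β β ℝ} (hA : A.IsHermitian)
    (M : Matrix α α ℝ) {q : ℝ} (hM : M *ᵥ (fun _ => 1) = q • fun _ => 1) {R : Multiset ℝ}
    (hroots : M.charpoly.roots = q ::ₘ R) :
    (A ⊗ₖ (of fun _ _ => (1 : ℝ)) + 1 ⊗ₖ M).charpoly.roots =
      A.charpoly.roots.map (fun x => Fintype.card α * x + q) + Fintype.card β • R := by
  set U : Matrix β β ℝ := (hA.eigenvectorUnitary : Matrix β β ℝ)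
  set d : β → ℝ := RCLike.ofReal ∘ hA.eigenvalues
  have hUU : star U * U = 1 := Unitary.star_mul_self_of_mem hA.eigenvectorUnitary.2
  have hUU' : U * star U = 1 := Unitary.mul_star_self_of_mem hA.eigenvectorUnitary.2
  have hconj : A ⊗ₖ (of fun _ _ => (1 : ℝ)) + 1 ⊗ₖ M =
      U ⊗ₖ 1 * (diagonal d ⊗ₖ (of fun _ _ => (1 : ℝ)) + 1 ⊗ₖ M) * (star U ⊗ₖ 1) := by
    conv_lhs => rw [hA.spectral_theorem, Unitary.conjStarAlgAut_apply]
    simp only [Matrix.mul_add, Matrix.add_mul, ← mul_kronecker_mul, Matrix.one_mul,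
      Matrix.mul_one, hUU']
    rfl
  have hprod : ∏ i, (d i • (of fun _ _ => (1 : ℝ)) + M).charpoly ≠ 0 :=
    (monic_prod_of_monic _ _ fun i _ => charpoly_monic _).ne_zero
  rw [hconj, charpoly_mul_comm, ← Matrix.mul_assoc, ← mul_kronecker_mul, hUU, Matrix.one_mul,
    one_kronecker_one, Matrix.one_mul, charpoly_diagonal_kronecker_add_one_kronecker,
    roots_prod _ _ hprod, hA.roots_charpoly_eq_eigenvalues, Multiset.map_map]
  simp_rw [add_comm _ M, roots_charpoly_add_smul_allOnes M hM hroots]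
  rw [Multiset.bind_cons]
  congr 1
  simp [Multiset.bind, Multiset.join, Multiset.map_const', Multiset.sum_replicate]

end Matrices

theorem lexProd_adj {α β : Type u} (G : SimpleGraph α) (H : SimpleGraph β) (x y : α × β) :
    (lexProd G H).Adj x y ↔ G.Adj x.1 y.1 ∨ (x.1 = y.1 ∧ H.Adj x.2 y.2) := Iff.rfl

theorem adjMatrix_lexProd {R : Type*} [NonAssocSemiring R] {α β : Type u} [DecidableEq α]
    (G : SimpleGraph α) (H : SimpleGraph β) [DecidableRel G.Adj] [DecidableRel H.Adj]
    [DecidableRel (lexProd G H).Adj] :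
    (lexProd G H).adjMatrix R = G.adjMatrix R ⊗ₖ (of fun _ _ => 1) + 1 ⊗ₖ H.adjMatrix R := by
  ext ⟨a, b⟩ ⟨c, d⟩
  by_cases hac : G.Adj a c
  · simp [lexProd_adj, hac, G.ne_of_adj hac]
  · by_cases h : a = c
    · subst h; simp [lexProd_adj]
    · simp [lexProd_adj, hac, h]

section Graphs

variable {α β : Type u} [Fintype α] [Fintype β]

theorem gdeg_eq_degree (G : SimpleGraph α) {v : α} [Fintype (G.neighborSet v)] :
    gdeg G v = G.degree v := by
  unfold gdeg
  congr!

theorem adjSpectrum_eq [DecidableEq α] (G : SimpleGraph α) [DecidableRel G.Adj] :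
    adjSpectrum G = (G.adjMatrix ℝ).charpoly.roots := by
  unfold adjSpectrum
  congr!

theorem gdeg_lexProd (G : SimpleGraph α) (H : SimpleGraph β) (a : α) (b : β) :
    gdeg (lexProd G H) (a, b) = Fintype.card β * gdeg G a + gdeg H b := by
  classical
  have hnbr : (lexProd G H).neighborFinset (a, b) =
      G.neighborFinset a ×ˢ univ ∪ {a} ×ˢ H.neighborFinset b := by
    ext ⟨c, d⟩
    simp [lexProd_adj, eq_comm, and_comm]
  have hdisj : Disjoint (G.neighborFinset a ×ˢ univ) ({a} ×ˢ H.neighborFinset b) := by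
    rw [Finset.disjoint_left]
    rintro ⟨c, d⟩ hc hc'
    simp only [mem_product, SimpleGraph.mem_neighborFinset, mem_singleton] at hc hc'
    exact G.ne_of_adj hc.1 hc'.1.symm
  simp only [gdeg_eq_degree, ← SimpleGraph.card_neighborFinset_eq_degree, hnbr,
    card_union_of_disjoint hdisj, card_product, card_univ, card_singleton, one_mul, mul_comm]

theorem adjSpectrum_lexProd (G : SimpleGraph α) (H : SimpleGraph β) {q : ℕ}
    (hreg : ∀ v, gdeg H v = q) {R : Multiset ℝ} (hH : adjSpectrum H = (q : ℝ) ::ₘ R) :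
    adjSpectrum (lexProd G H) =
      (adjSpectrum G).map (fun x => (Fintype.card β : ℝ) * x + q) + Fintype.card α • R := by
  classical
  have hM : H.adjMatrix ℝ *ᵥ (fun _ => 1) = (q : ℝ) • fun _ => 1 := by
    ext v
    rw [Pi.smul_apply, ← hreg v, gdeg_eq_degree, smul_eq_mul]
    exact H.adjMatrix_mulVec_const_apply
  rw [adjSpectrum_eq] at hH ⊢
  rw [adjSpectrum_eq, adjMatrix_lexProd]
  exact roots_charpoly_kronecker_allOnes_add (G.isHermitian_adjMatrix ℝ) _ hM hH

end Graphs

theorem card_powVert {α : Type u} [Fintype α] (m : ℕ) :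
    Fintype.card (powVert α (m + 1)) = Fintype.card α ^ (m + 1) := by
  induction m with
  | zero => simp [powVert]; rfl
  | succ m ih => exact (Fintype.card_prod _ _).trans (by rw [ih]; ring)

-- `q < n` forces `q = 0` when `n ≤ 1`, where the truncated division `/ (n - 1)` is degenerate.
theorem mul_geom_div_succ {n q : ℕ} (hqn : q < n) (i : ℕ) :
    q * ((n ^ (i + 1) - 1) / (n - 1)) = n * (q * ((n ^ i - 1) / (n - 1))) + q := by
  rcases Nat.lt_or_ge n 2 with hn | hn
  · obtain rfl : q = 0 := by omega
    simp
  · rw [← Nat.geomSum_eq hn, ← Nat.geomSum_eq hn, geom_sum_succ]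
    ring

def lexPowSpectrum (n : ℕ) (s : ℕ → ℝ) (R : Multiset ℝ) (k : ℕ) : Multiset ℝ :=
  ∑ i ∈ range k, n ^ (k - 1 - i) • R.map (fun x => (n : ℝ) ^ i * x + s i) + {s k}

theorem lexPowSpectrum_one {n : ℕ} {s : ℕ → ℝ} (hs0 : s 0 = 0) (R : Multiset ℝ) :
    lexPowSpectrum n s R 1 = s 1 ::ₘ R := by
  simp [lexPowSpectrum, hs0, add_comm R, Multiset.singleton_add]

theorem lexPowSpectrum_succ {n : ℕ} {q : ℝ} {s : ℕ → ℝ} (hs0 : s 0 = 0)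
    (hs : ∀ i, s (i + 1) = n * s i + q) (R : Multiset ℝ) (k : ℕ) :
    (lexPowSpectrum n s R k).map (fun x => n * x + q) + n ^ k • R =
      lexPowSpectrum n s R (k + 1) := by
  have hterm : ∀ i ∈ range k, (n ^ (k - 1 - i) • R.map (fun x => (n : ℝ) ^ i * x + s i)).map
      (fun x => n * x + q) =
        n ^ (k - (i + 1)) • R.map (fun x => (n : ℝ) ^ (i + 1) * x + s (i + 1)) := by
    intro i _
    rw [Multiset.map_nsmul, Multiset.map_map, Nat.sub_sub, add_comm 1 i]
    congr 2
    ext x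
    simp only [Function.comp_apply, hs]
    ring
  rw [lexPowSpectrum, lexPowSpectrum, Multiset.map_add, ← Multiset.coe_mapAddMonoidHom, map_sum,
    Multiset.coe_mapAddMonoidHom, sum_congr rfl hterm, Multiset.map_singleton, ← hs,
    sum_range_succ' _ k]
  simp only [Nat.add_sub_cancel, Nat.sub_zero, pow_zero, one_mul, hs0, add_zero, Multiset.map_id']
  abel

theorem nsmul_map_sum_replicate {ι : Type*} (s : Finset ι) (h : ι → ℕ) (γ : ι → ℝ)
    (f : ℝ → ℝ) (m : ℕ) :
    m • (∑ j ∈ s, Multiset.replicate (h j) (γ j)).map f =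
      ∑ j ∈ s, Multiset.replicate (m * h j) (f (γ j)) := by
  rw [← Multiset.coe_mapAddMonoidHom, map_sum, smul_sum]
  simp [Multiset.map_replicate, Multiset.nsmul_replicate]

section LexPow

variable {α : Type u} [Fintype α] (H : SimpleGraph α) {q : ℕ} (hreg : ∀ v, gdeg H v = q)
include hreg

theorem gdeg_lexPow {r : ℕ → ℕ} (hr0 : r 0 = 0) (hr : ∀ i, r (i + 1) = Fintype.card α * r i + q)
    (m : ℕ) (v : powVert α (m + 1)) : gdeg (lexPow H (m + 1)) v = r (m + 1) := by
  induction m with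
  | zero => exact (hreg v).trans (by rw [hr, hr0, mul_zero, zero_add])
  | succ m ih =>
    obtain ⟨a, b⟩ := v
    rw [hr, ← ih a, ← hreg b]
    exact gdeg_lexProd _ _ a b

theorem adjSpectrum_lexPow_eq {R : Multiset ℝ} (hH : adjSpectrum H = (q : ℝ) ::ₘ R)
    {s : ℕ → ℝ} (hs0 : s 0 = 0) (hs : ∀ i, s (i + 1) = Fintype.card α * s i + q) (m : ℕ) :
    adjSpectrum (lexPow H (m + 1)) = lexPowSpectrum (Fintype.card α) s R (m + 1) := by
  induction m with
  | zero =>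
    rw [zero_add, lexPowSpectrum_one hs0, hs, hs0, mul_zero, zero_add]
    exact hH
  | succ m ih =>
    rw [← lexPowSpectrum_succ hs0 hs, ← ih, ← card_powVert]
    exact adjSpectrum_lexProd (lexPow H (m + 1)) H hreg hH

end LexPow

theorem adjSpectrum_lexPow_general {α : Type u} [Fintype α]
    (H : SimpleGraph α) (n q t : ℕ)
    (hn : Fintype.card α = n) (hconn : H.Connected) (hreg : ∀ v, gdeg H v = q)
    (gamH : Fin (t + 1) → ℝ) (h : Fin (t + 1) → ℕ)
    (h1 : gamH 0 = q) (hh1 : h 0 = 1)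
    (hspec : adjSpectrum H = ∑ j, Multiset.replicate (h j) (gamH j))
    (r : ℕ → ℕ) (hr : ∀ i, r i = q * ((n ^ i - 1) / (n - 1))) :
    ∀ k : ℕ, 1 ≤ k →
      (∀ v, gdeg (lexPow H k) v = r k) ∧
      Fintype.card (powVert α k) = n ^ k ∧
      adjSpectrum (lexPow H k) =
        (∑ i ∈ Finset.range k, ∑ j ∈ Finset.univ.erase 0,
            Multiset.replicate (n ^ (k - 1 - i) * h j)
              ((n : ℝ) ^ i * gamH j + ((r i : ℕ) : ℝ)))
          + {((r k : ℕ) : ℝ)} := by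
  intro k hk
  obtain ⟨m, rfl⟩ : ∃ m, k = m + 1 := ⟨k - 1, by omega⟩
  subst hn
  have hqn : q < Fintype.card α := by
    classical
    obtain ⟨v⟩ := hconn.nonempty
    rw [← hreg v, gdeg_eq_degree]
    exact H.degree_lt_card_verts v
  have hr0 : r 0 = 0 := by simp [hr]
  have hr_succ : ∀ i, r (i + 1) = Fintype.card α * r i + q := fun i => by
    rw [hr, hr, mul_geom_div_succ hqn]
  have hH : adjSpectrum H = (q : ℝ) ::ₘ ∑ j ∈ univ.erase 0, Multiset.replicate (h j) (gamH j) := by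
    rw [hspec, ← add_sum_erase _ _ (mem_univ 0), hh1, h1]
    rfl
  refine ⟨gdeg_lexPow H hreg hr0 hr_succ m, card_powVert m, ?_⟩
  rw [adjSpectrum_lexPow_eq H hreg hH (s := fun i => r i) (by simp [hr0])
    (fun i => by simp [hr_succ]) m, lexPowSpectrum]
  simp_rw [nsmul_map_sum_replicate]

/-- Degree, order and adjacency spectrum of the lexicographic power `H^k`
of a connected `q`-regular graph `H`; `r i = q·(nⁱ-1)/(n-1)` (the natural division
being exact). -/
theorem adjSpectrum_lexPow {α : Type u} [Fintype α]
    (H : SimpleGraph α) (n q t : ℕ)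
    (hn : Fintype.card α = n) (hconn : H.Connected) (hreg : ∀ v, gdeg H v = q)
    (gamH : Fin (t + 1) → ℝ) (h : Fin (t + 1) → ℕ)
    (hanti : StrictAnti gamH) (h1 : gamH 0 = q) (hh1 : h 0 = 1) (hhpos : ∀ j, 0 < h j)
    (hspec : adjSpectrum H = ∑ j, Multiset.replicate (h j) (gamH j))
    (r : ℕ → ℕ) (hr : ∀ i, r i = q * ((n ^ i - 1) / (n - 1))) :
    ∀ k : ℕ, 1 ≤ k →
      (∀ v, gdeg (lexPow H k) v = r k) ∧
      Fintype.card (powVert α k) = n ^ k ∧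
      adjSpectrum (lexPow H k) =
        (∑ i ∈ Finset.range k, ∑ j ∈ Finset.univ.erase 0,
            Multiset.replicate (n ^ (k - 1 - i) * h j)
              ((n : ℝ) ^ i * gamH j + ((r i : ℕ) : ℝ)))
          + {((r k : ℕ) : ℝ)} :=
  adjSpectrum_lexPow_general H n q t hn hconn hreg gamH h h1 hh1 hspec r hr
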